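/- arXiv:1301.0510 — 7 statements merged into one kernel-verified Lean document; each statement's English description precedes it below -/
import Mathlib

section
/- Let G be a group, H a subgroup of G, and θ : H → G an injective group homomorphism, and let HNN(G,H,θ) denote the corresponding HNN extension. Let k ≥ 1, let n₁,…,n_k be nonzero integers, and let g₀,…,g_k ∈ G be such that: g_i ≠ e for every i ∈ {1,…,k−1}; for every i ∈ {1,…,k−1} with n_i > 0 and n_{i+1} < 0 one has g_i ∉ H; and for every i ∈ {1,…,k−1} with n_i < 0 and n_{i+1} > 0 one has g_i ∉ θ(H). Then the element g₀ t^{n₁} g₁ t^{n₂} ⋯ t^{n_k} g_k is not equal to the identity in HNN(G,H,θ). -/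
/-!
A word `g₀ t^{n₁} g₁ ⋯ t^{n_k} g_k` with no pinch can be spelled letter by letter as one of
Mathlib's reduced words: `t^{nᵢ} gᵢ` becomes `|nᵢ| - 1` letters `(sign nᵢ, 1)` followed by
`(sign nᵢ, gᵢ)`. Inside a syllable consecutive letters carry the same sign, and between syllables
a sign change is only allowed where the absence of a pinch permits it. Mathlib's normal form
theorem says that a reduced word with at least one letter does not lie in `G`, in particular is
not `1`.
-/

open HNNExtension NormalWord

namespace HNNExtension

variable {G : Type*} [Group G] {A B : Subgroup G} {φ : A ≃* B}

theorem ReducedWord.prod_ne_one_of_toList_ne_nil (w : ReducedWord G A B) (hw : w.toList ≠ []) :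
    w.prod φ ≠ 1 := fun h =>
  hw (ReducedWord.toList_eq_nil_of_mem_of_range φ w (h ▸ one_mem _))

-- Junk value `-1` at `0`.
def unitSign (n : ℤ) : ℤˣ := if 0 < n then 1 else -1

theorem unitSign_mul_natAbs {n : ℤ} (hn : n ≠ 0) : (unitSign n : ℤ) * n.natAbs = n := by
  unfold unitSign
  split_ifs with h
  · simp [abs_of_pos h]
  · simp [abs_of_neg (lt_of_le_of_ne (not_lt.1 h) hn)]

theorem unitSign_eq_of_not_pinch {n n' : ℤ} {g : G} (hn : n ≠ 0) (hn' : n' ≠ 0)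
    (hA : 0 < n → n' < 0 → g ∉ A) (hB : n < 0 → 0 < n' → g ∉ B)
    (hg : g ∈ toSubgroup A B (unitSign n)) : unitSign n = unitSign n' := by
  unfold unitSign at hg ⊢
  split_ifs at hg ⊢ <;> first | rfl | (exfalso; simp_all; omega)

def syllableLetters (n : ℤ) (g : G) : List (ℤˣ × G) :=
  List.replicate (n.natAbs - 1) (unitSign n, 1) ++ [(unitSign n, g)]

theorem syllableLetters_ne_nil (n : ℤ) (g : G) : syllableLetters n g ≠ [] := by
  simp [syllableLetters]

theorem fst_eq_of_mem_syllableLetters {n : ℤ} {g : G} {p : ℤˣ × G}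
    (hp : p ∈ syllableLetters n g) : p.1 = unitSign n := by
  simp only [syllableLetters, List.mem_append, List.mem_replicate, List.mem_singleton] at hp
  rcases hp with ⟨-, rfl⟩ | rfl <;> rfl

theorem getLast?_syllableLetters (n : ℤ) (g : G) :
    (syllableLetters n g).getLast? = some (unitSign n, g) :=
  List.getLast?_concat

theorem isChain_syllableLetters (n : ℤ) (g : G) :
    (syllableLetters n g).IsChain
      fun a b => a.2 ∈ toSubgroup A B a.1 → a.1 = b.1 := by
  refine List.Pairwise.isChain (List.pairwise_of_forall_mem_list fun a ha b hb _ => ?_)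
  rw [fst_eq_of_mem_syllableLetters ha, fst_eq_of_mem_syllableLetters hb]

theorem prod_map_syllableLetters {n : ℤ} (hn : n ≠ 0) (g : G) :
    ((syllableLetters n g).map fun x => (t : HNNExtension G A B φ) ^ (x.1 : ℤ) * of x.2).prod
      = t ^ n * of g := by
  have hm : n.natAbs - 1 + 1 = n.natAbs := by omega
  simp only [syllableLetters, List.map_append, List.map_replicate, List.map_singleton,
    List.prod_append, List.prod_replicate, List.prod_singleton, map_one, mul_one]
  rw [← mul_assoc, ← zpow_natCast, ← zpow_mul, ← zpow_add]
  congr 2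
  conv_rhs => rw [← unitSign_mul_natAbs hn, ← hm]
  push_cast
  ring

theorem of_mul_prod_syllables_ne_one (g₀ : G) (ws : List (ℤ × G)) (hws : ws ≠ [])
    (hn : ∀ p ∈ ws, p.1 ≠ 0)
    (hred : ws.IsChain fun a b => a.2 ∈ toSubgroup A B (unitSign a.1) →
      unitSign a.1 = unitSign b.1) :
    of g₀ * (ws.map fun p => (t : HNNExtension G A B φ) ^ p.1 * of p.2).prod ≠ 1 := by
  set L := ws.map fun p => syllableLetters p.1 p.2
  have hnil : [] ∉ L := by
    simpa [L] using fun n g _ => (syllableLetters_ne_nil n g).symm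
  have hchain : L.flatten.IsChain fun a b => a.2 ∈ toSubgroup A B a.1 → a.1 = b.1 := by
    refine (List.isChain_flatten hnil).2 ⟨?_, ?_⟩
    · simp only [L, List.mem_map]
      rintro _ ⟨p, -, rfl⟩
      exact isChain_syllableLetters _ _
    · refine List.isChain_map _ |>.2 (hred.imp fun a b hab x hx y hy => ?_)
      rw [getLast?_syllableLetters, Option.mem_some_iff] at hx
      subst hx
      rw [fst_eq_of_mem_syllableLetters (List.mem_of_mem_head? hy)]
      exact hab
  have hprod : (⟨g₀, L.flatten, hchain⟩ : ReducedWord G A B).prod φ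
      = of g₀ * (ws.map fun p => (t : HNNExtension G A B φ) ^ p.1 * of p.2).prod := by
    simp only [ReducedWord.prod, L, List.map_flatten, List.prod_flatten, List.map_map]
    congr 2
    exact List.map_congr_left fun p hp => prod_map_syllableLetters (hn p hp) p.2
  rw [← hprod]
  refine ReducedWord.prod_ne_one_of_toList_ne_nil _ fun h => ?_
  obtain ⟨p, hp⟩ := List.exists_mem_of_ne_nil ws hws
  exact syllableLetters_ne_nil p.1 p.2 (List.flatten_eq_nil_iff.1 h _ (List.mem_map_of_mem hp))

end HNNExtension

theorem britton_lemma_general {G : Type*} [Group G] (H : Subgroup G) (θ : H →* G)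
    (hθ : Function.Injective θ)
    (k : ℕ) (hk : 1 ≤ k) (nn : ℕ → ℤ) (g : ℕ → G)
    (hn : ∀ i, 1 ≤ i → i ≤ k → nn i ≠ 0)
    (hpinch₁ : ∀ i, 1 ≤ i → i ≤ k - 1 → 0 < nn i → nn (i + 1) < 0 → g i ∉ H)
    (hpinch₂ : ∀ i, 1 ≤ i → i ≤ k - 1 → nn i < 0 → 0 < nn (i + 1) → g i ∉ θ.range) :
    HNNExtension.of (g 0) *
        ((List.range k).map fun i =>
          (HNNExtension.t : HNNExtension G H θ.range (MonoidHom.ofInjective hθ)) ^ nn (i + 1) *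
            HNNExtension.of (g (i + 1))).prod ≠ 1 := by
  have hmap := of_mul_prod_syllables_ne_one (φ := MonoidHom.ofInjective hθ) (g 0)
    ((List.range k).map fun i => (nn (i + 1), g (i + 1)))
  simp only [List.map_map] at hmap
  refine hmap (by simp; omega) ?_ ?_
  · simp only [List.mem_map, List.mem_range]
    rintro _ ⟨i, hi, rfl⟩
    exact hn (i + 1) (by omega) (by omega)
  · refine (List.isChain_map _).2 ((List.isChain_range _ _).2 fun i hi => ?_)
    exact unitSign_eq_of_not_pinch (hn _ (by omega) (by omega)) (hn _ (by omega) (by omega))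
      (hpinch₁ _ (by omega) (by omega)) (hpinch₂ _ (by omega) (by omega))

/-- **Britton's Lemma.** Let `G` be a group, `H ≤ G` a subgroup and `θ : H → G` an injective
group homomorphism, and form the HNN extension `HNNExtension G H θ.range φ` (where
`φ : H ≃* θ.range` is the isomorphism induced by `θ`), in which `t h t⁻¹ = θ h` for `h ∈ H`.
If `k ≥ 1`, the integers `n₁, …, n_k` are nonzero, `g₁, …, g_{k-1}` are nontrivial, and the
word `g₀ t^{n₁} g₁ ⋯ t^{n_k} g_k` is reduced (no pinches `t g_i t⁻¹` with `g_i ∈ H` and no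
pinches `t⁻¹ g_i t` with `g_i ∈ θ(H)`), then this word is not the identity. -/
theorem britton_lemma {G : Type*} [Group G] (H : Subgroup G) (θ : H →* G)
    (hθ : Function.Injective θ)
    (k : ℕ) (hk : 1 ≤ k) (nn : ℕ → ℤ) (g : ℕ → G)
    (hn : ∀ i, 1 ≤ i → i ≤ k → nn i ≠ 0)
    (hg : ∀ i, 1 ≤ i → i ≤ k - 1 → g i ≠ 1)
    (hpinch₁ : ∀ i, 1 ≤ i → i ≤ k - 1 → 0 < nn i → nn (i + 1) < 0 → g i ∉ H)
    (hpinch₂ : ∀ i, 1 ≤ i → i ≤ k - 1 → nn i < 0 → 0 < nn (i + 1) → g i ∉ θ.range) :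
    HNNExtension.of (g 0) *
        ((List.range k).map fun i =>
          (HNNExtension.t : HNNExtension G H θ.range (MonoidHom.ofInjective hθ)) ^ nn (i + 1) *
            HNNExtension.of (g (i + 1))).prod ≠ 1 :=
  britton_lemma_general H θ hθ k hk nn g hn hpinch₁ hpinch₂
end

section
/- Let n, m be integers with 2 ≤ n < |m| and let G be the subgroup of BS(n,m) generated by a and b⁻¹ab. Then the centralizer of G in BS(n,m) equals the subgroup {a^{nk} : k ∈ ℤ} generated by a^n. -/
/-- The single relator `b a^n b⁻¹ a^{-m}` of the Baumslag–Solitar group `BS(n,m)`. -/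
def BSRels (n m : ℤ) : Set (FreeGroup Bool) :=
  {FreeGroup.of true * FreeGroup.of false ^ n * (FreeGroup.of true)⁻¹ *
    FreeGroup.of false ^ (-m)}

/-- The Baumslag–Solitar group `BS(n,m) = ⟨a, b ∣ b a^n b⁻¹ = a^m⟩`. -/
abbrev BS (n m : ℤ) := PresentedGroup (BSRels n m)

/-- The canonical generator `a` of `BS(n,m)`. -/
def BS.a (n m : ℤ) : BS n m := PresentedGroup.of false

/-- The canonical generator `b` of `BS(n,m)`. -/
def BS.b (n m : ℤ) : BS n m := PresentedGroup.of true

/-!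
`BS(n,m)` is the HNN extension of `ℤ = ⟨a⟩` whose stable letter `b` conjugates `nℤ` onto `mℤ`.
When `|n|, |m| > 1`, the generator `a` lies in neither associated subgroup, and Britton's
lemma gives two facts. First, anything commuting with `a` is a power `a^k`: comparing the
reduced words of `z a` and `a z` would otherwise put `a` into an associated subgroup. Second,
if `a^k` also commutes with `b⁻¹ a b`, then `b a^k b⁻¹` commutes with `a`, hence is a power
of `a`, which forces `n ∣ k`. Conversely `a^{nk} = b⁻¹ a^{mk} b` commutes with `b⁻¹ a b`.
-/

namespace HNNExtension

open NormalWord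

variable {G : Type*} [Group G] {A B : Subgroup G} {φ : A ≃* B}

theorem exists_reducedWord_prod_eq (x : HNNExtension G A B φ) :
    ∃ w : ReducedWord G A B, w.prod φ = x := by
  obtain ⟨d⟩ := TransversalPair.nonempty G A B
  exact ⟨(NormalWord.equiv φ d x).toReducedWord, (NormalWord.equiv φ d).symm_apply_apply x⟩

theorem NormalWord.ReducedWord.exists_prod_eq_prod_mul_of (w : ReducedWord G A B)
    (hw : w.toList ≠ []) (g : G) :
    ∃ w' : ReducedWord G A B, w'.prod φ = w.prod φ * of g ∧ w'.head = w.head ∧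
      w'.toList.map Prod.fst = w.toList.map Prod.fst := by
  obtain ⟨l, c, hl⟩ := (List.eq_nil_or_concat w.toList).resolve_left hw
  rcases w with ⟨h, _, chain⟩
  dsimp only at hl
  subst hl
  rw [List.concat_eq_append] at chain
  -- `g` is absorbed into the last letter, whose `G`-part the chain condition never reads
  have chain' : (l ++ [(c.1, c.2 * g)]).IsChain
      (fun a b => a.2 ∈ toSubgroup A B a.1 → a.1 = b.1) := by
    rw [List.isChain_append] at chain ⊢
    refine ⟨chain.1, List.isChain_singleton _, fun x hx y hy => ?_⟩
    obtain rfl : y = (c.1, c.2 * g) := by simpa using hy.symm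
    exact chain.2.2 x hx c (by simp)
  refine ⟨⟨h, l ++ [(c.1, c.2 * g)], chain'⟩, ?_, rfl, by simp⟩
  simp [ReducedWord.prod, mul_assoc]

theorem mem_range_of_commute {G : Type*} [CommGroup G] {A B : Subgroup G} {φ : A ≃* B}
    {g : G} (hA : g ∉ A) (hB : g ∉ B) {y : HNNExtension G A B φ} (hy : Commute y (of g)) :
    y ∈ (of : G →* HNNExtension G A B φ).range := by
  obtain ⟨w, rfl⟩ := exists_reducedWord_prod_eq y
  by_cases hw : w.toList = []
  · exact ⟨w.head, by simp [ReducedWord.prod, hw]⟩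
  obtain ⟨w₁, hw₁, hhead, hfst⟩ := w.exists_prod_eq_prod_mul_of hw g
  let w₂ : ReducedWord G A B := ⟨g * w.head, w.toList, w.chain⟩
  have hprod : w₁.prod φ = w₂.prod φ := by
    rw [hw₁, hy.eq]
    simp [w₂, ReducedWord.prod, mul_assoc]
  obtain ⟨p, hp⟩ := Option.ne_none_iff_exists'.mp (mt List.head?_eq_none_iff.mp hw)
  have hu : p.1 ∈ w₁.toList.head?.map Prod.fst := by
    rw [← List.head?_map, hfst, List.head?_map, hp]
    rfl
  have hg := (ReducedWord.map_fst_eq_and_of_prod_eq φ hprod).2 p.1 hu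
  rw [hhead, show w₂.head = g * w.head from rfl, mul_comm g, inv_mul_cancel_left] at hg
  rcases Int.units_eq_one_or (-p.1) with h | h <;> rw [h] at hg
  exacts [(hA hg).elim, (hB hg).elim]

theorem t_mul_of_mul_inv_t_notMem_range {g : G} (hg : g ∉ A) :
    t * of g * t⁻¹ ∉ (of : G →* HNNExtension G A B φ).range := by
  intro h
  let w : ReducedWord G A B :=
    ⟨1, [(1, g), (-1, 1)], List.isChain_pair.2 fun hgA => absurd hgA hg⟩
  have hw : w.prod φ = t * of g * t⁻¹ := by simp [w, ReducedWord.prod, mul_assoc]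
  simpa [w] using ReducedWord.toList_eq_nil_of_mem_of_range φ w (hw ▸ h)

end HNNExtension

section ZPowRange

variable {α : Type*} [CommGroup α] [IsMulTorsionFree α] {n m : ℤ}

theorem zpowGroupHom_injective (hn : n ≠ 0) : Function.Injective (zpowGroupHom n : α →* α) :=
  zpow_left_injective hn

/-- `x ^ n ↦ x ^ m`; for `α = Multiplicative ℤ` this is `nℤ ≃ mℤ`, `nk ↦ mk`. -/
noncomputable def zpowRangeEquiv (hn : n ≠ 0) (hm : m ≠ 0) :
    (zpowGroupHom n : α →* α).range ≃* (zpowGroupHom m : α →* α).range :=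
  (MonoidHom.ofInjective (zpowGroupHom_injective hn)).symm.trans
    (MonoidHom.ofInjective (zpowGroupHom_injective hm))

@[simp]
theorem zpowRangeEquiv_ofInjective (hn : n ≠ 0) (hm : m ≠ 0) (x : α) :
    zpowRangeEquiv hn hm (MonoidHom.ofInjective (zpowGroupHom_injective hn) x) =
      MonoidHom.ofInjective (zpowGroupHom_injective hm) x := by
  simp [zpowRangeEquiv]

end ZPowRange

namespace Int

open Multiplicative

theorem ofAdd_mem_range_zpowGroupHom_iff {c k : ℤ} :
    ofAdd k ∈ (zpowGroupHom c : Multiplicative ℤ →* Multiplicative ℤ).range ↔ c ∣ k := by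
  constructor
  · rintro ⟨x, hx⟩
    exact ⟨toAdd x, by simpa [mul_comm] using congrArg toAdd hx.symm⟩
  · rintro ⟨j, rfl⟩
    exact ⟨ofAdd j, by rw [zpowGroupHom_apply, ← Int.ofAdd_mul, mul_comm]⟩

theorem ofAdd_one_notMem_range_zpowGroupHom {c : ℤ} (hc : 1 < |c|) :
    ofAdd (1 : ℤ) ∉ (zpowGroupHom c : Multiplicative ℤ →* Multiplicative ℤ).range := by
  rw [ofAdd_mem_range_zpowGroupHom_iff]
  intro h
  linarith [Int.le_of_dvd one_pos ((abs_dvd c 1).2 h)]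

end Int

namespace BS

open HNNExtension Multiplicative

variable {n m : ℤ}

theorem b_mul_a_zpow_mul_b_inv : b n m * a n m ^ n * (b n m)⁻¹ = a n m ^ m := by
  have h := PresentedGroup.one_of_mem (rels := BSRels n m) rfl
  simp only [map_mul, map_zpow, map_inv, zpow_neg, mul_inv_eq_one] at h
  exact h

theorem b_mul_a_zpow_mul_mul_b_inv (k : ℤ) :
    b n m * a n m ^ (n * k) * (b n m)⁻¹ = a n m ^ (m * k) := by
  rw [zpow_mul, zpow_mul, ← conj_zpow, b_mul_a_zpow_mul_b_inv]

def lift {H : Type*} [Group H] (x y : H) (h : y * x ^ n * y⁻¹ = x ^ m) : BS n m →* H :=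
  PresentedGroup.toGroup (f := fun i => if i then y else x) <| by
    rintro _ rfl
    simp [h]

@[simp]
theorem lift_a {H : Type*} [Group H] (x y : H) (h : y * x ^ n * y⁻¹ = x ^ m) :
    lift x y h (a n m) = x :=
  PresentedGroup.toGroup.of _

@[simp]
theorem lift_b {H : Type*} [Group H] (x y : H) (h : y * x ^ n * y⁻¹ = x ^ m) :
    lift x y h (b n m) = y :=
  PresentedGroup.toGroup.of _

section

variable (hn : n ≠ 0) (hm : m ≠ 0)

noncomputable def equivHNNExtension :
    BS n m ≃* HNNExtension (Multiplicative ℤ) _ _ (zpowRangeEquiv hn hm) :=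
  MonoidHom.toMulEquiv
    (lift (of (ofAdd 1)) t <| by
      simpa [MonoidHom.ofInjective_apply, ← map_zpow] using
        (equiv_eq_conj (φ := zpowRangeEquiv hn hm)
          (MonoidHom.ofInjective (zpowGroupHom_injective hn) (ofAdd (1 : ℤ)))).symm)
    (HNNExtension.lift (zpowersHom _ (a n m)) (b n m) <| by
      intro y
      obtain ⟨x, rfl⟩ := (MonoidHom.ofInjective (zpowGroupHom_injective hn)).surjective y
      simpa [zpowersHom_apply, MonoidHom.ofInjective_apply, mul_comm _ (toAdd x)] using
        mul_inv_eq_iff_eq_mul.mp (b_mul_a_zpow_mul_mul_b_inv (toAdd x)))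
    (PresentedGroup.ext fun i => by cases i <;> simp [lift, a, b, PresentedGroup.toGroup.of])
    (by ext <;> simp)

@[simp]
theorem equivHNNExtension_a : equivHNNExtension hn hm (a n m) = of (ofAdd 1) := by
  simp [equivHNNExtension]

@[simp]
theorem equivHNNExtension_a_zpow (k : ℤ) :
    equivHNNExtension hn hm (a n m ^ k) = of (ofAdd k) := by
  rw [map_zpow, equivHNNExtension_a, ← map_zpow, ← Int.ofAdd_mul, one_mul]

@[simp]
theorem equivHNNExtension_b : equivHNNExtension hn hm (b n m) = t := by
  simp [equivHNNExtension]

@[simp]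
theorem equivHNNExtension_symm_of (x : Multiplicative ℤ) :
    (equivHNNExtension hn hm).symm (of x) = a n m ^ toAdd x := by
  simp [equivHNNExtension, zpowersHom_apply]

end

theorem exists_eq_zpow_of_commute_a (hn : 1 < |n|) (hm : 1 < |m|) {z : BS n m}
    (hz : Commute (a n m) z) : ∃ k : ℤ, z = a n m ^ k := by
  let e := equivHNNExtension (abs_pos.mp (one_pos.trans hn)) (abs_pos.mp (one_pos.trans hm))
  obtain ⟨x, hx⟩ := mem_range_of_commute (Int.ofAdd_one_notMem_range_zpowGroupHom hn)
    (Int.ofAdd_one_notMem_range_zpowGroupHom hm) (by simpa [e] using (hz.map e).symm)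
  exact ⟨toAdd x, by rw [← e.symm_apply_apply z, ← hx, equivHNNExtension_symm_of]⟩

theorem dvd_of_commute_conj_a (hn : 1 < |n|) (hm : 1 < |m|) {k : ℤ}
    (h : Commute ((b n m)⁻¹ * a n m * b n m) (a n m ^ k)) : n ∣ k := by
  have hn0 : n ≠ 0 := abs_pos.mp (one_pos.trans hn)
  have hm0 : m ≠ 0 := abs_pos.mp (one_pos.trans hm)
  have hconj : Commute (a n m) (b n m * a n m ^ k * (b n m)⁻¹) := by
    simpa [mul_assoc] using h.map (MulAut.conj (b n m))
  have hrange : t * of (ofAdd k) * t⁻¹ ∈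
      (of : Multiplicative ℤ →* HNNExtension _ _ _ (zpowRangeEquiv hn0 hm0)).range :=
    mem_range_of_commute (Int.ofAdd_one_notMem_range_zpowGroupHom hn)
      (Int.ofAdd_one_notMem_range_zpowGroupHom hm)
      (by simpa using (hconj.map (equivHNNExtension hn0 hm0)).symm)
  by_contra hk
  exact t_mul_of_mul_inv_t_notMem_range (mt Int.ofAdd_mem_range_zpowGroupHom_iff.mp hk) hrange

theorem commute_conj_a_zpow_mul (k : ℤ) :
    Commute ((b n m)⁻¹ * a n m * b n m) (a n m ^ (n * k)) := by
  have h : a n m ^ (n * k) = (b n m)⁻¹ * a n m ^ (m * k) * b n m := by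
    rw [← b_mul_a_zpow_mul_mul_b_inv]
    group
  rw [h]
  simpa using ((Commute.refl (a n m)).zpow_right (m * k)).map (MulAut.conj (b n m)⁻¹)

end BS

/-- For `2 ≤ n < |m|`, the centralizer in `BS(n,m)` of the subgroup `G = ⟨a, b⁻¹ a b⟩`
equals the subgroup `{a^{nk} : k ∈ ℤ}` generated by `a^n`. -/
theorem BS_centralizer_eq (n m : ℤ) (h1 : 2 ≤ n) (h2 : n < |m|) :
    Subgroup.centralizer
        ((Subgroup.closure {BS.a n m, (BS.b n m)⁻¹ * BS.a n m * BS.b n m} :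
          Subgroup (BS n m)) : Set (BS n m)) =
      Subgroup.zpowers (BS.a n m ^ n) := by
  have hn : 1 < |n| := lt_abs.mpr (Or.inl (by omega))
  have hm : 1 < |m| := by linarith
  ext z
  simp only [Subgroup.centralizer_closure, Subgroup.mem_centralizer_iff, Set.mem_insert_iff,
    Set.mem_singleton_iff, forall_eq_or_imp, forall_eq, Subgroup.mem_zpowers_iff]
  constructor
  · rintro ⟨ha, hc⟩
    obtain ⟨k, rfl⟩ := BS.exists_eq_zpow_of_commute_a hn hm ha
    obtain ⟨j, rfl⟩ := BS.dvd_of_commute_conj_a hn hm hc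
    exact ⟨j, (zpow_mul _ _ _).symm⟩
  · rintro ⟨k, rfl⟩
    rw [← zpow_mul]
    exact ⟨((Commute.refl _).zpow_right _).eq, (BS.commute_conj_a_zpow_mul k).eq⟩
end

section
/- Let n, m be integers with 2 ≤ n < |m|. The subgroup ⟨a⟩ of BS(n,m) generated by a is commensurated: for every g ∈ BS(n,m), the subgroups ⟨a⟩ and g⟨a⟩g⁻¹ are commensurable, i.e. their intersection has finite index in both. -/
/-!
Both generators of `BS(n,m)` conjugate a nonzero power of `a` to a nonzero power of `a`:
`a a^1 a⁻¹ = a^1` and `b a^n b⁻¹ = a^m`. Since `⟨x^k⟩` has finite index in `⟨x⟩` for `k ≠ 0`,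
any such element `g` satisfies `g⟨a⟩g⁻¹ ~ g⟨a^n⟩g⁻¹ = ⟨a^m⟩ ~ ⟨a⟩`, so it lies in the
commensurator of `⟨a⟩`. The commensurator is a subgroup, hence it is all of `BS(n,m)`.
-/

open Subgroup Pointwise

section Cyclic

variable {G : Type*} [Group G]

theorem Subgroup.relIndex_zpowers_zpow_ne_zero (x : G) {k : ℤ} (hk : k ≠ 0) :
    (zpowers (x ^ k)).relIndex (zpowers x) ≠ 0 := by
  let f := zpowersHom G x
  have hxk : zpowers (x ^ k) = (zpowers (Multiplicative.ofAdd k)).map f := by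
    rw [MonoidHom.map_zpowers]
    simp [f]
  have hx : zpowers x = (⊤ : Subgroup (Multiplicative ℤ)).map f := by
    rw [← MonoidHom.range_eq_map, range_zpowersHom]
  have hk' : (zpowers (Multiplicative.ofAdd k)).index ≠ 0 := by
    -- in `Multiplicative ℤ` this subgroup is `kℤ` up to `Multiplicative`
    change (AddSubgroup.zmultiples k).index ≠ 0
    rwa [Int.index_zmultiples, Int.natAbs_ne_zero]
  rw [hxk, hx, relIndex_map_map, top_sup_eq, relIndex_top_right]
  exact fun h ↦ hk' (eq_zero_of_zero_dvd (h ▸ index_dvd_of_le le_sup_left))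

theorem Subgroup.Commensurable.zpowers_zpow (x : G) {k : ℤ} (hk : k ≠ 0) :
    Commensurable (zpowers (x ^ k)) (zpowers x) := by
  refine ⟨relIndex_zpowers_zpow_ne_zero x hk, ?_⟩
  rw [relIndex_eq_one.mpr (zpowers_le.mpr (zpow_mem (mem_zpowers x) k))]
  exact one_ne_zero

theorem ConjAct.toConjAct_smul_zpowers (g x : G) :
    ConjAct.toConjAct g • zpowers x = zpowers (g * x * g⁻¹) :=
  (MulAut.conj g).toMonoidHom.map_zpowers x

theorem Subgroup.Commensurable.mem_commensurator_zpowers_of_conj_zpow_eq {g x : G} {n m : ℤ}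
    (hn : n ≠ 0) (hm : m ≠ 0) (h : g * x ^ n * g⁻¹ = x ^ m) :
    g ∈ commensurator (zpowers x) := by
  rw [commensurator_mem_iff]
  have hconj : Commensurable (ConjAct.toConjAct g • zpowers x)
      (ConjAct.toConjAct g • zpowers (x ^ n)) :=
    (commensurable_conj _).mp (zpowers_zpow x hn).symm
  rw [ConjAct.toConjAct_smul_zpowers g (x ^ n), h] at hconj
  exact hconj.trans (zpowers_zpow x hm)

end Cyclic

theorem BS.b_mul_a_zpow_mul_b_inv_s4 (n m : ℤ) :
    BS.b n m * BS.a n m ^ n * (BS.b n m)⁻¹ = BS.a n m ^ m := by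
  have hrel := PresentedGroup.one_of_mem (rels := BSRels n m) rfl
  simp only [map_mul, map_zpow, map_inv] at hrel
  rw [mul_eq_one_iff_eq_inv, zpow_neg, inv_inv] at hrel
  exact hrel

/-- For `2 ≤ n < |m|`, the cyclic subgroup `⟨a⟩` of `BS(n,m)` is commensurated: for every
`g ∈ BS(n,m)`, the subgroups `⟨a⟩` and `g ⟨a⟩ g⁻¹` are commensurable. -/
theorem BS_zpowers_a_commensurated (n m : ℤ) (h1 : 2 ≤ n) (h2 : n < |m|)
    (g : BS n m) :
    Subgroup.Commensurable (Subgroup.zpowers (BS.a n m))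
      (Subgroup.map (MulAut.conj g).toMonoidHom (Subgroup.zpowers (BS.a n m))) := by
  have hn : n ≠ 0 := by omega
  have hm : m ≠ 0 := by
    rintro rfl
    simp only [abs_zero] at h2
    omega
  have hgen : ∀ j, PresentedGroup.of j ∈ Commensurable.commensurator (zpowers (BS.a n m))
    | false => Commensurable.mem_commensurator_zpowers_of_conj_zpow_eq (g := BS.a n m)
        one_ne_zero one_ne_zero (by group)
    | true => Commensurable.mem_commensurator_zpowers_of_conj_zpow_eq hn hm
        (BS.b_mul_a_zpow_mul_b_inv_s4 n m)
  exact ((Commensurable.commensurator_mem_iff _ g).mp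
    (PresentedGroup.generated_by _ _ hgen g)).symm
end

section
/- Let n, m be integers with 2 ≤ n < |m|. Let P be the amalgamated free product of two copies of ℤ over a copy of ℤ embedded into the first free factor as k ↦ n·k and into the second free factor as k ↦ m·k (in Lean, the pushout Monoid.PushoutI of the two injective homomorphisms ℤ → ℤ given by multiplication by n and by m). Then the group homomorphism P → BS(n,m) determined by sending the generator of the first free factor to a and the generator of the second free factor to b⁻¹ab is injective. -/
/-- The amalgamated free product of two copies of `ℤ` over `ℤ`, embedded into the first
free factor by `k ↦ n·k` and into the second by `k ↦ m·k`, realized as `Monoid.PushoutI`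
of the two corresponding homomorphisms `ℤ → ℤ` (written multiplicatively). -/
abbrev AmalgZZ (n m : ℤ) :=
  Monoid.PushoutI (fun i : Bool =>
    AddMonoidHom.toMultiplicative (zmultiplesHom ℤ (if i then m else n)))

/-!
Let `P` be the amalgam, with factor maps `ι₁, ι₂ : ℤ → P`, and let `P*` be the HNN extension
of `P` whose stable letter `t` conjugates the second factor onto the first,
`t · ι₂(g) · t⁻¹ = ι₁(g)`. Writing `x` for the
generator of the first factor, `xⁿ = ι₁(n) = ι₂(m)`, so `t xⁿ t⁻¹ = ι₁(m) = xᵐ`: the assignment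
`a ↦ x`, `b ↦ t` defines a homomorphism `BS(n,m) → P*`, and it sends `b⁻¹ a b` to `ι₂(1)`.
Composed with `ψ` it is therefore the canonical map `P → P*`, which is injective by the normal
form theorem for HNN extensions. Identifying the two factors of `P` needs `ι₁, ι₂` to be
injective (normal form theorem for amalgams), which holds because `n, m ≠ 0`.
-/

open Multiplicative HNNExtension

namespace Monoid.PushoutI

variable {G H : Type*} [Group G] [Group H] {φ : Bool → H →* G}

noncomputable def swapEquiv (hφ : ∀ i, Function.Injective (φ i)) :
    (of (φ := φ) true).range ≃* (of (φ := φ) false).range :=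
  (MonoidHom.ofInjective (of_injective hφ true)).symm.trans
    (MonoidHom.ofInjective (of_injective hφ false))

theorem swapEquiv_apply_of (hφ : ∀ i, Function.Injective (φ i)) (g : G) :
    (swapEquiv hφ ⟨of true g, g, rfl⟩ : PushoutI φ) = of false g := by
  rw [swapEquiv, MulEquiv.trans_apply, MonoidHom.ofInjective_apply]
  exact congrArg _ ((MulEquiv.symm_apply_eq _).2 (Subtype.ext rfl))

abbrev SwapHNN (hφ : ∀ i, Function.Injective (φ i)) : Type _ :=
  HNNExtension (PushoutI φ) (of true).range (of false).range (swapEquiv hφ)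

theorem of_of_false_eq_conj (hφ : ∀ i, Function.Injective (φ i)) (g : G) :
    (HNNExtension.of (of false g) : SwapHNN hφ) = t * HNNExtension.of (of true g) * t⁻¹ := by
  rw [← swapEquiv_apply_of hφ, equiv_eq_conj]

theorem conj_of_base (hφ : ∀ i, Function.Injective (φ i)) (c : H) :
    t * (HNNExtension.of (base φ c) : SwapHNN hφ) * t⁻¹ =
      HNNExtension.of (of false (φ true c)) := by
  rw [of_of_false_eq_conj, of_apply_eq_base]

end Monoid.PushoutI

theorem toMultiplicative_zmultiplesHom_injective {k : ℤ} (hk : k ≠ 0) :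
    Function.Injective (AddMonoidHom.toMultiplicative (zmultiplesHom ℤ k)) := fun _ _ h =>
  toAdd.injective (mul_left_injective₀ hk (congrArg toAdd h))

namespace AmalgZZ

open Monoid.PushoutI

variable {n m : ℤ}

theorem embedding_injective (hn : n ≠ 0) (hm : m ≠ 0) (i : Bool) :
    Function.Injective (AddMonoidHom.toMultiplicative (zmultiplesHom ℤ (if i then m else n))) := by
  cases i
  exacts [toMultiplicative_zmultiplesHom_injective hn, toMultiplicative_zmultiplesHom_injective hm]

theorem of_false_ofAdd_one_zpow (k : ℤ) :
    (of false (ofAdd 1) : AmalgZZ n m) ^ k = of false (ofAdd k) := by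
  rw [← map_zpow, ← ofAdd_zsmul, smul_eq_mul, mul_one]

theorem base_ofAdd_one : base _ (ofAdd 1) = (of false (ofAdd n) : AmalgZZ n m) := by
  rw [← of_apply_eq_base _ false]
  simp

end AmalgZZ

namespace BS

open Monoid.PushoutI

variable {n m : ℤ}

noncomputable def toSwapHNN (hn : n ≠ 0) (hm : m ≠ 0) :
    BS n m →* SwapHNN (AmalgZZ.embedding_injective hn hm) :=
  PresentedGroup.toGroup (f := fun i => if i then t else HNNExtension.of (of false (ofAdd 1)))
    (by
      rintro _ rfl
      have hrel := conj_of_base (AmalgZZ.embedding_injective hn hm) (ofAdd 1)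
      simp only [AmalgZZ.base_ofAdd_one] at hrel
      simp only [map_mul, map_zpow, map_inv, FreeGroup.lift_apply_of, if_true, Bool.false_eq_true,
        if_false, ← map_zpow HNNExtension.of, AmalgZZ.of_false_ofAdd_one_zpow, hrel]
      simp)

theorem toSwapHNN_comp (hn : n ≠ 0) (hm : m ≠ 0) (ψ : AmalgZZ n m →* BS n m)
    (hψa : ψ (of false (ofAdd 1)) = BS.a n m)
    (hψb : ψ (of true (ofAdd 1)) = (BS.b n m)⁻¹ * BS.a n m * BS.b n m) :
    (toSwapHNN hn hm).comp ψ = HNNExtension.of := by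
  have ha : toSwapHNN hn hm (BS.a n m) = HNNExtension.of (of false (ofAdd 1)) :=
    PresentedGroup.toGroup.of _
  have hb : toSwapHNN hn hm (BS.b n m) = t := PresentedGroup.toGroup.of _
  ext i : 1
  apply MonoidHom.ext_mint
  cases i
  · simp [hψa, ha]
  · simp [hψb, ha, hb, of_of_false_eq_conj, mul_assoc]

end BS

/-- For `2 ≤ n < |m|`, the group homomorphism from the amalgamated free product
`ℤ *_{ℤ} ℤ` (with embeddings `k ↦ nk` and `k ↦ mk`) to `BS(n,m)` determined by sending the
generator of the first free factor to `a` and the generator of the second free factor to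
`b⁻¹ a b` is injective. -/
theorem BS_amalgam_injective (n m : ℤ) (h1 : 2 ≤ n) (h2 : n < |m|)
    (ψ : AmalgZZ n m →* BS n m)
    (hψa : ψ (Monoid.PushoutI.of false (Multiplicative.ofAdd (1 : ℤ))) = BS.a n m)
    (hψb : ψ (Monoid.PushoutI.of true (Multiplicative.ofAdd (1 : ℤ))) =
      (BS.b n m)⁻¹ * BS.a n m * BS.b n m) :
    Function.Injective ψ := by
  have hn : n ≠ 0 := by omega
  have hm : m ≠ 0 := by rintro rfl; rw [abs_zero] at h2; omega
  refine Function.Injective.of_comp (f := BS.toSwapHNN hn hm) ?_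
  rw [← MonoidHom.coe_comp, BS.toSwapHNN_comp hn hm ψ hψa hψb]
  apply HNNExtension.of_injective
end

section
/- Let n, m be integers with 2 ≤ n < |m| and let μ be the normalized Haar probability measure on 𝕋. Let E ⊆ 𝕋 be a Borel set such that for every natural number k and every ζ ∈ 𝕋 with ζ^{((n·m)^k)} = 1, the translated set ζ·E agrees with E up to a μ-null set (μ(E Δ ζ·E) = 0). Then μ(E) = 0 or μ(E) = 1. -/
/-!
Let `ν = μ|E` and `N = |nm| ≥ 2`. The hypothesis makes `ν` invariant under rotation by every
root of unity of order `N ^ k`; these roots are dense in `𝕋`, and the rotations preserving a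
finite measure form a closed set (test against bounded continuous functions and use dominated
convergence), so `ν` is rotation invariant. By uniqueness of Haar measure on the compact group `𝕋`,
`ν = c • μ`; evaluating on `𝕋` gives `c = μ E`, and evaluating on `E` then gives
`μ E = μ E ^ 2`.
-/

open MeasureTheory

noncomputable instance : MeasurableSpace Circle := borel Circle
instance : BorelSpace Circle := ⟨rfl⟩

open scoped BoundedContinuousFunction

theorem dense_setOf_int_div_pow {K : Type*} [Field K] [LinearOrder K] [IsStrictOrderedRing K]
    [FloorRing K] [TopologicalSpace K] [OrderTopology K] {N : ℕ} (hN : 1 < N) :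
    Dense {x : K | ∃ (j : ℤ) (k : ℕ), x = j / N ^ k} := by
  refine dense_of_exists_between fun a b hab => ?_
  obtain ⟨k, hk⟩ := pow_unbounded_of_one_lt (b - a)⁻¹ (by exact_mod_cast hN : (1 : K) < N)
  have hNk : (0 : K) < N ^ k := by positivity
  have hstep : 1 / (N : K) ^ k < b - a := by
    rw [div_lt_iff₀ hNk]; rwa [inv_lt_iff_one_lt_mul₀ (sub_pos.2 hab), mul_comm] at hk
  refine ⟨(⌊a * N ^ k⌋ + 1 : ℤ) / N ^ k, ⟨_, k, rfl⟩, ?_, ?_⟩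
  · rw [lt_div_iff₀ hNk]; push_cast; exact Int.lt_floor_add_one _
  · calc ((⌊a * N ^ k⌋ + 1 : ℤ) : K) / N ^ k ≤ (a * N ^ k + 1) / N ^ k := by
          gcongr; push_cast; linarith [Int.floor_le (a * N ^ k)]
      _ = a + 1 / N ^ k := by field_simp
      _ < b := by linarith

theorem Circle.dense_setOf_pow_pow_eq_one {N : ℕ} (hN : 1 < N) :
    Dense {z : Circle | ∃ k : ℕ, z ^ N ^ k = 1} := by
  have hrange : DenseRange fun x : ℝ => Circle.exp (2 * Real.pi * x) :=
    (Circle.exp_surjective.comp (mul_left_surjective₀ Real.two_pi_pos.ne')).denseRange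
  refine (hrange.dense_image (by fun_prop) (dense_setOf_int_div_pow hN)).mono ?_
  rintro _ ⟨_, ⟨j, k, rfl⟩, rfl⟩
  refine ⟨k, ?_⟩
  rw [← Nat.cast_pow, ← Circle.exp_natCast_mul]
  convert Circle.exp_two_pi_mul_int j using 2
  push_cast
  field_simp

section TopologicalGroup

variable {G : Type*} [Group G] [MeasurableSpace G]

theorem MeasureTheory.Measure.map_mul_left_restrict_eq_of_measure_symmDiff_eq_zero
    [MeasurableMul G] (μ : Measure G) [μ.IsMulLeftInvariant] {E : Set G} {g : G}
    (h : μ (symmDiff E ((g * ·) '' E)) = 0) :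
    (μ.restrict E).map (g * ·) = μ.restrict E := by
  have hpre : (g * ·) ⁻¹' ((g * ·) '' E) = E := Set.preimage_image_eq E (mul_right_injective g)
  calc (μ.restrict E).map (g * ·)
      = (μ.map (MeasurableEquiv.mulLeft g)).restrict ((g * ·) '' E) := by
        rw [MeasurableEquiv.restrict_map, MeasurableEquiv.coe_mulLeft, hpre]
    _ = μ.restrict ((g * ·) '' E) := by
        rw [MeasurableEquiv.coe_mulLeft, map_mul_left_eq_self]
    _ = μ.restrict E := Measure.restrict_congr_set (measure_symmDiff_eq_zero_iff.1 h).symm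

variable [TopologicalSpace G] [IsTopologicalGroup G] [BorelSpace G]

theorem MeasureTheory.Measure.isClosed_setOf_map_mul_left_eq [HasOuterApproxClosed G]
    [FirstCountableTopology G] (ν : Measure G) [IsFiniteMeasure ν] :
    IsClosed {g : G | ν.map (g * ·) = ν} := by
  have hset : {g : G | ν.map (g * ·) = ν} =
      ⋂ f : G →ᵇ ℝ, {g | ∫ x, f (g * x) ∂ν = ∫ x, f x ∂ν} := by
    ext g
    simp only [Set.mem_ofPred_eq, Set.mem_iInter]
    have hmap (f : G →ᵇ ℝ) : ∫ x, f x ∂ν.map (g * ·) = ∫ x, f (g * x) ∂ν :=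
      integral_map (by fun_prop) f.continuous.aestronglyMeasurable
    refine ⟨fun h f => by rw [← hmap, h], fun h => ?_⟩
    exact ext_of_forall_integral_eq_of_IsFiniteMeasure fun f => by rw [hmap, h]
  rw [hset]
  refine isClosed_iInter fun f => isClosed_eq ?_ continuous_const
  refine continuous_of_dominated (bound := fun _ => ‖f‖) (fun g => ?_) (fun g => ?_)
    (integrable_const _) (ae_of_all _ fun x => by fun_prop)
  · exact (f.continuous.comp (continuous_const_mul g)).aestronglyMeasurable
  · exact ae_of_all _ fun x => f.norm_coe_le_norm _

theorem MeasureTheory.Measure.isMulLeftInvariant_of_dense [HasOuterApproxClosed G]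
    [FirstCountableTopology G] (ν : Measure G) [IsFiniteMeasure ν] {S : Set G} (hS : Dense S)
    (h : ∀ g ∈ S, ν.map (g * ·) = ν) : ν.IsMulLeftInvariant :=
  ⟨fun g => (isClosed_setOf_map_mul_left_eq ν).closure_subset_iff.2 h (hS g)⟩

theorem MeasureTheory.Measure.measure_eq_zero_or_one_of_isMulLeftInvariant_restrict
    [CompactSpace G] (μ : Measure G) [μ.IsHaarMeasure] [IsProbabilityMeasure μ] (E : Set G)
    [(μ.restrict E).IsMulLeftInvariant] : μ E = 0 ∨ μ E = 1 := by
  have hsmul := isMulInvariant_eq_smul_of_compactSpace (μ.restrict E) μ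
  have hfactor : μ E = haarScalarFactor (μ.restrict E) μ := by
    simpa using congrArg (· Set.univ) hsmul
  have hidem : μ E * μ E = μ E := by
    conv_rhs => rw [← Measure.restrict_apply_self μ E, hsmul]
    rw [Measure.smul_apply, ENNReal.smul_def, smul_eq_mul, ← hfactor]
  rcases eq_or_ne (μ E) 0 with h0 | h0
  · exact .inl h0
  · exact .inr ((ENNReal.mul_eq_left h0 (measure_ne_top μ E)).1 hidem)

end TopologicalGroup

theorem rotations_ergodic_general (n m : ℤ) (h1 : 2 ≤ n) (h2 : n < |m|)
    (μ : Measure Circle) [μ.IsHaarMeasure] [IsProbabilityMeasure μ]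
    (E : Set Circle)
    (hinv : ∀ (k : ℕ) (ζ : Circle), ζ ^ ((n * m) ^ k) = 1 →
      μ (symmDiff E ((fun y => ζ * y) '' E)) = 0) :
    μ E = 0 ∨ μ E = 1 := by
  have hN : 1 < (n * m).natAbs := by
    rw [Int.natAbs_mul]
    have hn : 2 ≤ n.natAbs := by omega
    have hm : 0 < m.natAbs := Int.natAbs_pos.2 (abs_pos.1 (by omega))
    nlinarith
  have : (μ.restrict E).IsMulLeftInvariant := by
    refine Measure.isMulLeftInvariant_of_dense _ (Circle.dense_setOf_pow_pow_eq_one hN) ?_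
    rintro ζ ⟨k, hk⟩
    refine Measure.map_mul_left_restrict_eq_of_measure_symmDiff_eq_zero μ (hinv k ζ ?_)
    rwa [← pow_natAbs_eq_one, Int.natAbs_pow]
  exact Measure.measure_eq_zero_or_one_of_isMulLeftInvariant_restrict μ E

/-- For `2 ≤ n < |m|` and `μ` the normalized Haar probability measure on `𝕋`: if a Borel
set `E ⊆ 𝕋` is, up to `μ`-null sets, invariant under rotation by every `(nm)^k`-th root of
unity (`k ∈ ℕ`), then `μ(E) = 0` or `μ(E) = 1`. -/
theorem rotations_ergodic (n m : ℤ) (h1 : 2 ≤ n) (h2 : n < |m|)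
    (μ : Measure Circle) [μ.IsHaarMeasure] [IsProbabilityMeasure μ]
    (E : Set Circle) (hE : MeasurableSet E)
    (hinv : ∀ (k : ℕ) (ζ : Circle), ζ ^ ((n * m) ^ k) = 1 →
      μ (symmDiff E ((fun y => ζ * y) '' E)) = 0) :
    μ E = 0 ∨ μ E = 1 :=
  rotations_ergodic_general n m h1 h2 μ E hinv
end

section
/- Let n, m be integers with 2 ≤ n < |m| and let μ be the normalized Haar probability measure on 𝕋. The equivalence relation R_{n,m} is ergodic: if E ⊆ 𝕋 is a Borel set that is a union of R_{n,m}-classes (i.e. for all y, z ∈ 𝕋 with (y,z) ∈ R_{n,m} one has y ∈ E if and only if z ∈ E), then μ(E) = 0 or μ(E) = 1. -/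
/-!
Taking `a = b = j` in the definition of `R_{n,m}` shows that a saturated set `E` is a union of
fibres of `y ↦ y ^ (n * m) ^ j` for every `j`, i.e. it is invariant under rotation by every
`(n * m) ^ j`-th root of unity. By Lebesgue's density theorem, a measurable set invariant under
rotations of unbounded finite orders is null or conull.
-/

open MeasureTheory

def Rnm (n m : ℤ) (y z : Circle) : Prop :=
  ∃ a b : ℕ, y ^ (n ^ a * m ^ b) = z ^ (m ^ a * n ^ b)

open Set Filter Measure
open scoped Pointwise

namespace AddCircle

theorem surjective_toCircle {T : ℝ} (hT : T ≠ 0) :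
    Function.Surjective (toCircle : AddCircle T → Circle) :=
  fun z => (homeomorphCircle hT).surjective z |>.imp fun _ hx => by
    rwa [← homeomorphCircle_apply hT]

theorem map_toCircle_volume (μ : Measure Circle) [μ.IsHaarMeasure] [IsProbabilityMeasure μ] :
    (volume : Measure UnitAddCircle).map toCircle = μ := by
  have hmeas : Measurable (toCircle : UnitAddCircle → Circle) := continuous_toCircle.measurable
  have : IsProbabilityMeasure (volume : Measure UnitAddCircle) := ⟨UnitAddCircle.measure_univ⟩
  have : IsProbabilityMeasure ((volume : Measure UnitAddCircle).map toCircle) :=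
    isProbabilityMeasure_map hmeas.aemeasurable
  have : IsMulLeftInvariant ((volume : Measure UnitAddCircle).map toCircle) := by
    refine ⟨fun g => ?_⟩
    obtain ⟨x, rfl⟩ := surjective_toCircle one_ne_zero g
    have hcomm : (toCircle x * ·) ∘ toCircle = toCircle ∘ (x + · : UnitAddCircle → _) :=
      funext fun y => (toCircle_add x y).symm
    rw [map_map (measurable_const_mul _) hmeas, hcomm, ← map_map hmeas (measurable_const_add x),
      map_add_left_eq_self]
  have : IsHaarMeasure ((volume : Measure UnitAddCircle).map toCircle) :=
    isHaarMeasure_of_isCompact_nonempty_interior _ univ isCompact_univ (by simp) (by simp)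
      (measure_ne_top _ _)
  exact isHaarMeasure_eq_of_isProbabilityMeasure _ _

variable {T : ℝ} [Fact (0 < T)]

theorem ae_empty_or_univ_of_forall_zsmul_pow_eq {k : ℤ} (hk : 1 < |k|) {s : Set (AddCircle T)}
    (hs : NullMeasurableSet s volume)
    (hsat : ∀ (j : ℕ) (x y : AddCircle T), k ^ j • x = k ^ j • y → (x ∈ s ↔ y ∈ s)) :
    s =ᵐ[volume] (∅ : Set (AddCircle T)) ∨ s =ᵐ[volume] univ := by
  -- rotations by the `|k| ^ j`-torsion points `T / |k| ^ j` preserve `s`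
  let u : ℕ → AddCircle T := fun j => ↑((1 : ℝ) / ↑(k.natAbs ^ j) * T)
  replace hk : 1 < k.natAbs := by rwa [Int.abs_eq_natAbs, Nat.one_lt_cast] at hk
  have hu_order (j : ℕ) : addOrderOf (u j) = k.natAbs ^ j := by
    convert! addOrderOf_div_of_gcd_eq_one (p := T) (m := 1) (pow_pos (pos_of_gt hk) j)
      (gcd_one_left _)
    norm_cast
  have hu_torsion (j : ℕ) : k ^ j • u j = 0 := by
    rw [← addOrderOf_dvd_iff_zsmul_eq_zero, hu_order, Int.natCast_pow, Int.natCast_natAbs,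
      ← abs_pow, abs_dvd]
  have hu_inv (j : ℕ) : (u j +ᵥ s : Set _) =ᵐ[volume] s := by
    refine .of_eq (Set.ext fun x => ?_)
    rw [mem_vadd_set_iff_neg_vadd_mem, vadd_eq_add]
    exact hsat j _ _ (by rw [smul_add, smul_neg, hu_torsion, neg_zero, zero_add])
  refine ae_empty_or_univ_of_forall_vadd_ae_eq_self (l := atTop) hs hu_inv ?_
  simp_rw [Function.comp_def, hu_order]
  exact tendsto_pow_atTop_atTop_of_one_lt hk

end AddCircle

namespace Circle

theorem measure_eq_zero_or_one_of_forall_zpow_pow_eq (μ : Measure Circle) [μ.IsHaarMeasure]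
    [IsProbabilityMeasure μ] {k : ℤ} (hk : 1 < |k|) {E : Set Circle} (hE : MeasurableSet E)
    (hsat : ∀ (j : ℕ) (y z : Circle), y ^ k ^ j = z ^ k ^ j → (y ∈ E ↔ z ∈ E)) :
    μ E = 0 ∨ μ E = 1 := by
  have hmeas : Measurable (AddCircle.toCircle : UnitAddCircle → Circle) :=
    AddCircle.continuous_toCircle.measurable
  rw [← AddCircle.map_toCircle_volume μ, map_apply hmeas hE, ← ae_eq_empty,
    ← UnitAddCircle.measure_univ, ← ae_eq_univ_iff_measure_eq (hmeas hE).nullMeasurableSet]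
  refine AddCircle.ae_empty_or_univ_of_forall_zsmul_pow_eq hk (hmeas hE).nullMeasurableSet
    fun j x y hxy => hsat j _ _ ?_
  rw [← AddCircle.toCircle_zsmul, ← AddCircle.toCircle_zsmul, hxy]

end Circle

/-- For `2 ≤ n < |m|` and `μ` the normalized Haar probability measure on `𝕋`, the
equivalence relation `R_{n,m}` is ergodic: every Borel set `E ⊆ 𝕋` that is a union of
`R_{n,m}`-classes has measure `0` or `1`. -/
theorem Rnm_ergodic (n m : ℤ) (h1 : 2 ≤ n) (h2 : n < |m|)
    (μ : Measure Circle) [μ.IsHaarMeasure] [IsProbabilityMeasure μ]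
    (E : Set Circle) (hE : MeasurableSet E)
    (hsat : ∀ y z : Circle, Rnm n m y z → (y ∈ E ↔ z ∈ E)) :
    μ E = 0 ∨ μ E = 1 := by
  have hnm : 1 < |n * m| := by
    rw [abs_mul, abs_of_nonneg (by omega : 0 ≤ n)]
    nlinarith
  refine Circle.measure_eq_zero_or_one_of_forall_zpow_pow_eq μ hnm hE fun j y z hyz => ?_
  exact hsat y z ⟨j, j, by rwa [mul_comm (m ^ j), ← mul_pow]⟩
end

section
/- Let n, m be integers with 2 ≤ n < |m|, let μ be the normalized Haar probability measure on 𝕋, and let a, b be natural numbers. Let S ⊆ 𝕋 be a Borel set and φ : 𝕋 → 𝕋 a Borel map that is injective on S, whose image φ(S) is a Borel set, and which satisfies φ(y)^{(m^a · n^b)} = y^{(n^a · m^b)} for all y ∈ S. Then μ(φ(S)) = (n/|m|)^{a−b} · μ(S), where (n/|m|)^{a−b} is the real number n/|m| raised to the integer power a − b. (In particular, the Radon–Nikodym cocycle of R_{n,m} takes only values in log(n/|m|)·ℤ, and equals log(n/|m|) on the set R₀ = {(y,z) : y^m = z^n}.) -/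
open MeasureTheory

/-!
A continuous surjective endomorphism `f` of a compact group preserves Haar measure; if `f` is
injective on `T`, then `f⁻¹ (f T)` is the disjoint union of the translates `c • T`, `c ∈ ker f`,
so `μ (f T) = |ker f| μ T`. The map `z ↦ z ^ k` of the circle has kernel of order `|k|` and is
locally injective. Put `K = m^a n^b`, `N = n^a m^b` and cut `S` into countably many measurable
pieces `T` on which `z ↦ z ^ N` is injective; since `(φ z) ^ K = z ^ N`, the map `z ↦ z ^ K` is
injective on `φ T` with the same image, so `|K| μ (φ T) = |N| μ T`. Summing over the pieces,
`μ (φ S) = (|N| / |K|) μ S = (n / |m|) ^ (a - b) μ S`.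
-/

open Set Function Pointwise

theorem IsLocallyInjective.exists_iUnion_injOn_eq_univ {X Y : Type*} [TopologicalSpace X]
    [SecondCountableTopology X] [Nonempty X] {f : X → Y} (hf : IsLocallyInjective f) :
    ∃ U : ℕ → Set X, (∀ i, IsOpen (U i)) ∧ (∀ i, InjOn f (U i)) ∧ ⋃ i, U i = univ := by
  choose U hU_open hU_mem hU_inj using hf
  obtain ⟨s, hs_count, hs_cover⟩ :=
    TopologicalSpace.countable_cover_nhds fun x => (hU_open x).mem_nhds (hU_mem x)
  obtain ⟨e, rfl⟩ := hs_count.exists_eq_range <| by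
    contrapose! hs_cover
    simp [hs_cover, eq_comm (a := (∅ : Set X))]
  exact ⟨U ∘ e, fun i => hU_open _, fun i => hU_inj _, by rwa [biUnion_range] at hs_cover⟩

namespace MonoidHom

variable {G H : Type*} [Group G] [Group H]

theorem preimage_image_eq_iUnion_smul (f : G →* H) (T : Set G) :
    f ⁻¹' (f '' T) = ⋃ c : f.ker, (c : G) • T := by
  ext x
  simp only [mem_preimage, mem_image, mem_iUnion, mem_smul_set, smul_eq_mul]
  constructor
  · rintro ⟨t, ht, hft⟩
    exact ⟨⟨x * t⁻¹, by simp [mem_ker, hft]⟩, t, ht, inv_mul_cancel_right x t⟩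
  · rintro ⟨c, t, ht, rfl⟩
    exact ⟨t, ht, by simp [mem_ker.1 c.2]⟩

theorem pairwise_disjoint_smul_of_injOn (f : G →* H) {T : Set G} (hT : InjOn f T) :
    Pairwise (Disjoint on fun c : f.ker => (c : G) • T) := by
  intro c d hcd
  refine Set.disjoint_left.2 ?_
  rintro _ ⟨t, ht, rfl⟩ ⟨s, hs, hst⟩
  have hft : f s = f t := by simpa [mem_ker.1 c.2, mem_ker.1 d.2] using congrArg f hst
  obtain rfl := hT hs ht hft
  exact hcd (Subtype.ext (mul_right_cancel hst).symm)

section Haar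

variable [TopologicalSpace G] [IsTopologicalGroup G] [PolishSpace G] [MeasurableSpace G]
  [BorelSpace G] {μ : Measure G} [μ.IsHaarMeasure]
  [TopologicalSpace H] [IsTopologicalGroup H] [CompactSpace H] [T2Space H] [MeasurableSpace H]
  [BorelSpace H] {ν : Measure H} [ν.IsHaarMeasure]

theorem measure_image_of_injOn (f : G →* H) (hf_cont : Continuous f) (hf_surj : Surjective f)
    [Finite f.ker] (huniv : μ univ = ν univ) {T : Set G} (hT : MeasurableSet T)
    (hinj : InjOn f T) : ν (f '' T) = Nat.card f.ker * μ T := by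
  have himage : MeasurableSet (f '' T) := hT.image_of_continuousOn_injOn hf_cont.continuousOn hinj
  rw [← (f.measurePreserving hf_cont hf_surj huniv).measure_preimage himage.nullMeasurableSet,
    preimage_image_eq_iUnion_smul, measure_iUnion (f.pairwise_disjoint_smul_of_injOn hinj)
      fun c => hT.const_smul _]
  simp only [measure_smul, ENNReal.tsum_const, ENat.card_eq_coe_natCard, ENat.toENNReal_coe]

end Haar

section CompactEndomorphism

variable [TopologicalSpace G] [IsTopologicalGroup G] [CompactSpace G] [PolishSpace G]
  [MeasurableSpace G] [BorelSpace G] {μ : Measure G} [μ.IsHaarMeasure] {f g : G →* G} {φ : G → G}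

theorem natCard_ker_mul_measure_image_eq_of_injOn (hf_cont : Continuous f)
    (hf_surj : Surjective f) [Finite f.ker] (hg_cont : Continuous g) (hg_surj : Surjective g)
    [Finite g.ker] (hφ : Measurable φ) {T : Set G} (hT : MeasurableSet T) (hφT : InjOn φ T)
    (hgT : InjOn g T) (hfg : ∀ y ∈ T, f (φ y) = g y) :
    Nat.card f.ker * μ (φ '' T) = Nat.card g.ker * μ T := by
  have hfφT : InjOn f (φ '' T) := by
    rintro _ ⟨y, hy, rfl⟩ _ ⟨z, hz, rfl⟩ h
    rw [hgT hy hz (by rwa [hfg y hy, hfg z hz] at h)]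
  have hfg_image : f '' (φ '' T) = g '' T := by
    rw [image_image]
    exact image_congr hfg
  rw [← measure_image_of_injOn f hf_cont hf_surj rfl (hT.image_of_measurable_injOn hφ hφT) hfφT,
    hfg_image, measure_image_of_injOn g hg_cont hg_surj rfl hT hgT]

theorem natCard_ker_mul_measure_image_eq (hf_cont : Continuous f)
    (hf_surj : Surjective f) [Finite f.ker] (hg_cont : Continuous g) (hg_surj : Surjective g)
    [Finite g.ker] (hg_loc : IsLocallyInjective g) (hφ : Measurable φ) {S : Set G}
    (hS : MeasurableSet S) (hφS : InjOn φ S) (hfg : ∀ y ∈ S, f (φ y) = g y) :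
    Nat.card f.ker * μ (φ '' S) = Nat.card g.ker * μ S := by
  obtain ⟨U, hU_open, hU_inj, hU_cover⟩ := hg_loc.exists_iUnion_injOn_eq_univ
  set D := disjointed U
  have hD_meas (i : ℕ) : MeasurableSet (S ∩ D i) :=
    hS.inter (MeasurableSet.disjointed (fun j => (hU_open j).measurableSet) i)
  have hD_disj : Pairwise (Disjoint on fun i => S ∩ D i) := fun i j hij =>
    ((disjoint_disjointed U hij).inter_left' S).inter_right' S
  have hS_eq : S = ⋃ i, S ∩ D i := by
    rw [← inter_iUnion, iUnion_disjointed, hU_cover, inter_univ]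
  have hφD_disj : Pairwise (Disjoint on fun i => φ '' (S ∩ D i)) := fun i j hij =>
    (hD_disj hij).image hφS inter_subset_left inter_subset_left
  have hφD_meas (i : ℕ) : MeasurableSet (φ '' (S ∩ D i)) :=
    (hD_meas i).image_of_measurable_injOn hφ (hφS.mono inter_subset_left)
  rw [hS_eq, image_iUnion, measure_iUnion hφD_disj hφD_meas, measure_iUnion hD_disj hD_meas,
    ← ENNReal.tsum_mul_left, ← ENNReal.tsum_mul_left]
  refine tsum_congr fun i => natCard_ker_mul_measure_image_eq_of_injOn hf_cont hf_surj hg_cont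
    hg_surj hφ (hD_meas i) (hφS.mono inter_subset_left)
    ((hU_inj i).mono (inter_subset_right.trans (disjointed_subset U i)))
    fun y hy => hfg y hy.1

end CompactEndomorphism

end MonoidHom

namespace Circle

variable {k : ℤ}

theorem zpow_surjective (hk : k ≠ 0) : Surjective (fun z : Circle => z ^ k) :=
  have : NeZero k := ⟨hk⟩
  (isQuotientCoveringMap_zpow k).surjective

theorem isLocallyInjective_zpow (hk : k ≠ 0) : IsLocallyInjective (fun z : Circle => z ^ k) :=
  have : NeZero k := ⟨hk⟩
  ((isQuotientCoveringMap_zpow k).isCoveringMap).isLocalHomeomorph.isLocallyInjective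

theorem natCard_ker_zpowGroupHom (hk : k ≠ 0) :
    Nat.card (zpowGroupHom k : Circle →* Circle).ker = k.natAbs := by
  have : NeZero k.natAbs := ⟨Int.natAbs_ne_zero.2 hk⟩
  rw [← HasEnoughRootsOfUnity.natCard_rootsOfUnity Circle k.natAbs]
  refine Nat.card_congr ((_root_.toUnits : Circle ≃* Circleˣ).toEquiv.subtypeEquiv fun z => ?_)
  simp [mem_rootsOfUnity, ← Units.val_inj, pow_natAbs_eq_one]

theorem natAbs_mul_measure_image_eq {μ : Measure Circle} [μ.IsHaarMeasure] {K N : ℤ}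
    (hK : K ≠ 0) (hN : N ≠ 0) {φ : Circle → Circle} (hφ : Measurable φ) {S : Set Circle}
    (hS : MeasurableSet S) (hφS : InjOn φ S) (hKN : ∀ y ∈ S, φ y ^ K = y ^ N) :
    K.natAbs * μ (φ '' S) = N.natAbs * μ S := by
  have hK_card := natCard_ker_zpowGroupHom hK
  have hN_card := natCard_ker_zpowGroupHom hN
  have : Finite (zpowGroupHom K : Circle →* Circle).ker :=
    Nat.finite_of_card_ne_zero (hK_card ▸ Int.natAbs_ne_zero.2 hK)
  have : Finite (zpowGroupHom N : Circle →* Circle).ker :=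
    Nat.finite_of_card_ne_zero (hN_card ▸ Int.natAbs_ne_zero.2 hN)
  rw [← hK_card, ← hN_card]
  exact MonoidHom.natCard_ker_mul_measure_image_eq (continuous_zpow K) (zpow_surjective hK)
    (continuous_zpow N) (zpow_surjective hN) (isLocallyInjective_zpow hN) hφ hS hφS hKN

end Circle

theorem div_zpow_natCast_sub {x y : ℝ} (hx : x ≠ 0) (hy : y ≠ 0) (a b : ℕ) :
    (x / y) ^ ((a : ℤ) - b) = x ^ a * y ^ b / (y ^ a * x ^ b) := by
  rw [zpow_sub₀ (div_ne_zero hx hy), zpow_natCast, zpow_natCast, div_pow, div_pow]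
  field_simp

theorem Rnm_radon_nikodym_general (n m : ℤ) (h1 : 2 ≤ n) (h2 : n < |m|)
    (μ : Measure Circle) [μ.IsHaarMeasure]
    (a b : ℕ) (S : Set Circle) (hS : MeasurableSet S)
    (φ : Circle → Circle) (hφmeas : Measurable φ)
    (hφinj : Set.InjOn φ S)
    (hφ : ∀ y ∈ S, φ y ^ (m ^ a * n ^ b) = y ^ (n ^ a * m ^ b)) :
    μ (φ '' S) = ENNReal.ofReal (((n : ℝ) / |(m : ℝ)|) ^ ((a : ℤ) - (b : ℤ))) * μ S := by
  have hn : 0 < n := by omega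
  have hm : m ≠ 0 := by rintro rfl; simp at h2; omega
  have hK : m ^ a * n ^ b ≠ 0 := by positivity
  have hN : n ^ a * m ^ b ≠ 0 := by positivity
  have key := Circle.natAbs_mul_measure_image_eq (μ := μ) hK hN hφmeas hS hφinj hφ
  have hratio : ENNReal.ofReal (((n : ℝ) / |(m : ℝ)|) ^ ((a : ℤ) - (b : ℤ))) =
      (n ^ a * m ^ b).natAbs / (m ^ a * n ^ b).natAbs := by
    rw [div_zpow_natCast_sub (by positivity) (by positivity), ← ENNReal.ofReal_natCast,
      ← ENNReal.ofReal_natCast, ← ENNReal.ofReal_div_of_pos (by positivity)]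
    congr 1
    push_cast [Nat.cast_natAbs, abs_mul, abs_pow, abs_of_pos hn]
    ring
  rw [hratio, div_eq_mul_inv, mul_right_comm, ← div_eq_mul_inv,
    ENNReal.eq_div_iff (by simpa using hK) (by simp), key]

/-- For `2 ≤ n < |m|`, `μ` the normalized Haar probability measure on `𝕋` and `a, b ∈ ℕ`:
if `S ⊆ 𝕋` is Borel and `φ : 𝕋 → 𝕋` is a Borel map, injective on `S`, with `φ(S)` Borel,
satisfying `φ(y)^{m^a·n^b} = y^{n^a·m^b}` for all `y ∈ S`, then
`μ(φ(S)) = (n/|m|)^{a-b} · μ(S)`. -/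
theorem Rnm_radon_nikodym (n m : ℤ) (h1 : 2 ≤ n) (h2 : n < |m|)
    (μ : Measure Circle) [μ.IsHaarMeasure] [IsProbabilityMeasure μ]
    (a b : ℕ) (S : Set Circle) (hS : MeasurableSet S)
    (φ : Circle → Circle) (hφmeas : Measurable φ)
    (hφinj : Set.InjOn φ S) (himg : MeasurableSet (φ '' S))
    (hφ : ∀ y ∈ S, φ y ^ (m ^ a * n ^ b) = y ^ (n ^ a * m ^ b)) :
    μ (φ '' S) = ENNReal.ofReal (((n : ℝ) / |(m : ℝ)|) ^ ((a : ℤ) - (b : ℤ))) * μ S :=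
  Rnm_radon_nikodym_general n m h1 h2 μ a b S hS φ hφmeas hφinj hφ
end
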